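/- Let f(x) = 1/x mod 1 be the Gauss map on (0,1], with branch domains Z_j = (1/(j+1), 1/j) for j ≥ 1, and φ = −log|Df| (so that e^{S_nφ} = 1/|Df^n|). There exists C_d > 0 such that for all n ∈ ℕ and all x, y with f^i x and f^i y in the same Z_{j_i} for each i = 0, 1, …, n−1: |e^{S_nφ(x) − S_nφ(y)} − 1| ≤ C_d |f^n x − f^n y|^{1/2}, i.e. | |Df^n(y)|/|Df^n(x)| − 1 | ≤ C_d |f^n x − f^n y|^{1/2}. -/

import Mathlib

open MeasureTheory Filter Set Topology

noncomputable section

/-- Birkhoff sum `S_n φ = ∑_{i<n} φ ∘ f^i`. -/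
def birkhoff {X : Type*} (f : X → X) (φ : X → ℝ) (n : ℕ) (x : X) : ℝ :=
  ∑ i ∈ Finset.range n, φ (f^[i] x)

/-- The Gauss map `f(x) = 1/x mod 1`. -/
def gaussMap (x : ℝ) : ℝ := Int.fract x⁻¹

/-- The geometric potential `φ = −log|Df|` of the Gauss map. -/
def gaussPot (x : ℝ) : ℝ := -Real.log |deriv gaussMap x|

/-- The branch domain `Z_j = (1/(j+1), 1/j)` of the Gauss map. -/
def gaussBranch (j : ℕ) : Set ℝ := Set.Ioo ((j : ℝ) + 1)⁻¹ ((j : ℝ))⁻¹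

end

/-!
On a branch `Z_j` the Gauss map is `x ↦ x⁻¹ - j`, so `φ = 2 log x = -2 log x⁻¹` and
`|x - y| = x y |f x - f y|`. Since `log` is 1-Lipschitz on `[1, ∞)`, the `i`-th term of
`S_nφ(x) - S_nφ(y)` is at most `2 d_{i+1}`, where `d_i = |f^i x - f^i y|`. Going backwards
along the orbit, `d_i` never increases, and it shrinks by a factor `4` every two steps because
`x f(x) ≤ 1/2` on every branch; hence `|S_nφ(x) - S_nφ(y)| ≤ 6 d_n` with `d_n ≤ 1`, which
gives a Lipschitz (so also `1/2`-Hölder) bound on `e^{S_nφ(x) - S_nφ(y)} - 1`. Finally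
`|Df^n| = e^{-S_nφ}` by the chain rule.
-/

open Finset Real

theorem abs_exp_sub_one_le_abs_mul_exp_abs (t : ℝ) : |exp t - 1| ≤ |t| * exp |t| := by
  have h := Complex.norm_exp_sub_sum_le_norm_mul_exp (t : ℂ) 1
  rw [← Complex.ofReal_exp] at h
  simpa [← Complex.ofReal_one, ← Complex.ofReal_sub, -Complex.ofReal_exp, Complex.norm_real]
    using h

theorem log_sub_log_le_abs_sub {a b : ℝ} (ha : 0 < a) (hb : 1 ≤ b) :
    log a - log b ≤ |a - b| := by
  have hb0 : 0 < b := one_pos.trans_le hb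
  calc log a - log b = log (a / b) := (log_div ha.ne' hb0.ne').symm
    _ ≤ a / b - 1 := log_le_sub_one_of_pos (div_pos ha hb0)
    _ = (a - b) / b := by field_simp
    _ ≤ |a - b| / b := by gcongr; exact le_abs_self _
    _ ≤ |a - b| := div_le_self (abs_nonneg _) hb

theorem abs_log_sub_log_le_abs_sub {a b : ℝ} (ha : 1 ≤ a) (hb : 1 ≤ b) :
    |log a - log b| ≤ |a - b| := by
  rw [abs_sub_le_iff]
  exact ⟨log_sub_log_le_abs_sub (one_pos.trans_le ha) hb,
    abs_sub_comm a b ▸ log_sub_log_le_abs_sub (one_pos.trans_le hb) ha⟩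

theorem sum_range_succ_le_three_mul {d : ℕ → ℝ} {n : ℕ} (h0 : ∀ i, 0 ≤ d i)
    (hmono : ∀ i < n, d i ≤ d (i + 1)) (hgrow : ∀ i, i + 2 ≤ n → 4 * d i ≤ d (i + 2)) :
    ∑ i ∈ range n, d (i + 1) ≤ 3 * d n := by
  have key : ∀ m, m + 1 ≤ n →
      2 * ∑ i ∈ range (m + 1), d (i + 1) ≤ 3 * (d (m + 1) + d m) := by
    intro m
    induction m with
    | zero => intro _; simp only [zero_add, sum_range_one]; linarith [h0 0, h0 1]
    | succ m ih =>
      intro hm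
      rw [sum_range_succ]
      linarith [ih (by omega), hgrow m (by omega), h0 (m + 2)]
  cases n with
  | zero => simp [h0 0]
  | succ m => linarith [key m le_rfl, hmono m (by omega)]

theorem abs_birkhoff_sub_le_sum {X : Type*} (f : X → X) (φ : X → ℝ) (n : ℕ) (x y : X) :
    |birkhoff f φ n x - birkhoff f φ n y| ≤
      ∑ i ∈ range n, |φ (f^[i] x) - φ (f^[i] y)| := by
  rw [birkhoff, birkhoff, ← sum_sub_distrib]
  exact abs_sum_le_sum_abs _ _

theorem hasDerivAt_iterate_of_differentiableAt {𝕜 : Type*} [NontriviallyNormedField 𝕜]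
    {f : 𝕜 → 𝕜} {x : 𝕜} {n : ℕ} (hf : ∀ i < n, DifferentiableAt 𝕜 f (f^[i] x)) :
    HasDerivAt f^[n] (∏ i ∈ range n, deriv f (f^[i] x)) x := by
  induction n with
  | zero => simpa using hasDerivAt_id x
  | succ n ih =>
    rw [Function.iterate_succ', prod_range_succ, mul_comm]
    exact (hf n n.lt_succ_self).hasDerivAt.comp x (ih fun i hi => hf i (by omega))

theorem abs_deriv_iterate_eq_exp_neg_birkhoff {f : ℝ → ℝ} {x : ℝ} {n : ℕ}
    (hf : ∀ i < n, DifferentiableAt ℝ f (f^[i] x)) (hf' : ∀ i < n, deriv f (f^[i] x) ≠ 0) :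
    |deriv f^[n] x| = exp (-birkhoff f (fun z => -log |deriv f z|) n x) := by
  rw [(hasDerivAt_iterate_of_differentiableAt hf).deriv, abs_prod, birkhoff, ← sum_neg_distrib,
    exp_sum]
  refine prod_congr rfl fun i hi => ?_
  rw [neg_neg, exp_log (abs_pos.2 (hf' i (mem_range.1 hi)))]

section Branch

variable {j : ℕ} {x y : ℝ}

theorem pos_of_mem_gaussBranch (hx : x ∈ gaussBranch j) : 0 < x :=
  lt_trans (by positivity) hx.1

theorem lt_one_of_mem_gaussBranch (hx : x ∈ gaussBranch j) : x < 1 :=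
  hx.2.trans_le (Nat.cast_inv_le_one j)

theorem one_le_inv_of_mem_gaussBranch (hx : x ∈ gaussBranch j) : 1 ≤ x⁻¹ :=
  one_le_inv₀ (pos_of_mem_gaussBranch hx) |>.2 (lt_one_of_mem_gaussBranch hx).le

theorem one_le_of_mem_gaussBranch (hx : x ∈ gaussBranch j) : 1 ≤ j := by
  rcases Nat.eq_zero_or_pos j with rfl | hj
  · exact absurd hx.2 (by simpa using (pos_of_mem_gaussBranch hx).le)
  · exact hj

theorem floor_inv_of_mem_gaussBranch (hx : x ∈ gaussBranch j) : ⌊x⁻¹⌋ = j := by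
  have hx0 := pos_of_mem_gaussBranch hx
  have hj : (0 : ℝ) < j := by exact_mod_cast one_le_of_mem_gaussBranch hx
  rw [Int.floor_eq_iff, Int.cast_natCast]
  exact ⟨(lt_inv_comm₀ hx0 hj |>.1 hx.2).le,
    inv_lt_comm₀ (by positivity : (0 : ℝ) < j + 1) hx0 |>.1 hx.1⟩

theorem gaussMap_eq_of_mem_gaussBranch (hx : x ∈ gaussBranch j) : gaussMap x = x⁻¹ - j := by
  rw [gaussMap, Int.fract, floor_inv_of_mem_gaussBranch hx, Int.cast_natCast]

theorem hasDerivAt_gaussMap_of_mem_gaussBranch (hx : x ∈ gaussBranch j) :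
    HasDerivAt gaussMap (-(x ^ 2)⁻¹) x := by
  have hev : gaussMap =ᶠ[nhds x] fun t => t⁻¹ - j :=
    eventually_of_mem (isOpen_Ioo.mem_nhds hx) fun t ht => gaussMap_eq_of_mem_gaussBranch ht
  exact ((hasDerivAt_inv (pos_of_mem_gaussBranch hx).ne').sub_const _).congr_of_eventuallyEq hev

theorem gaussPot_eq_of_mem_gaussBranch (hx : x ∈ gaussBranch j) :
    gaussPot x = -(2 * log x⁻¹) := by
  have hx0 := pos_of_mem_gaussBranch hx
  rw [gaussPot, (hasDerivAt_gaussMap_of_mem_gaussBranch hx).deriv, abs_neg,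
    abs_of_pos (by positivity), ← inv_pow, log_pow, Nat.cast_ofNat]

theorem gaussMap_sub_gaussMap (hx : x ∈ gaussBranch j) (hy : y ∈ gaussBranch j) :
    gaussMap x - gaussMap y = x⁻¹ - y⁻¹ := by
  rw [gaussMap_eq_of_mem_gaussBranch hx, gaussMap_eq_of_mem_gaussBranch hy]
  ring

theorem abs_sub_eq_mul_abs_gaussMap_sub (hx : x ∈ gaussBranch j) (hy : y ∈ gaussBranch j) :
    |x - y| = x * y * |gaussMap x - gaussMap y| := by
  have hx0 := pos_of_mem_gaussBranch hx
  have hy0 := pos_of_mem_gaussBranch hy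
  rw [gaussMap_sub_gaussMap hx hy, inv_sub_inv hx0.ne' hy0.ne', abs_div,
    abs_of_pos (mul_pos hx0 hy0), abs_sub_comm]
  field_simp

theorem abs_gaussPot_sub_le (hx : x ∈ gaussBranch j) (hy : y ∈ gaussBranch j) :
    |gaussPot x - gaussPot y| ≤ 2 * |gaussMap x - gaussMap y| := by
  rw [gaussPot_eq_of_mem_gaussBranch hx, gaussPot_eq_of_mem_gaussBranch hy,
    gaussMap_sub_gaussMap hx hy,
    show -(2 * log x⁻¹) - -(2 * log y⁻¹) = -2 * (log x⁻¹ - log y⁻¹) by ring,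
    abs_mul, abs_neg, abs_two]
  exact mul_le_mul_of_nonneg_left (abs_log_sub_log_le_abs_sub (one_le_inv_of_mem_gaussBranch hx)
    (one_le_inv_of_mem_gaussBranch hy)) zero_le_two

theorem mul_gaussMap_le_half (hx : x ∈ gaussBranch j) : x * gaussMap x ≤ 1 / 2 := by
  have hx0 := pos_of_mem_gaussBranch hx
  have hj : (1 : ℝ) ≤ j := by exact_mod_cast one_le_of_mem_gaussBranch hx
  have hlow : 1 < (j + 1) * x := by
    rw [← inv_lt_iff_one_lt_mul₀' (by positivity)]
    exact hx.1
  rw [gaussMap_eq_of_mem_gaussBranch hx, mul_sub, mul_inv_cancel₀ hx0.ne']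
  nlinarith

theorem abs_gaussMap_sub_gaussMap_lt_one (x y : ℝ) : |gaussMap x - gaussMap y| < 1 :=
  Int.abs_sub_lt_one_of_floor_eq_floor (by simp [gaussMap])

end Branch

section Orbit

def SameGaussItinerary (n : ℕ) (x y : ℝ) : Prop :=
  ∀ i < n, ∃ j, gaussMap^[i] x ∈ gaussBranch j ∧ gaussMap^[i] y ∈ gaussBranch j

variable {n i : ℕ} {x y : ℝ}

theorem SameGaussItinerary.abs_iterate_sub_eq (h : SameGaussItinerary n x y) (hi : i < n) :
    |gaussMap^[i] x - gaussMap^[i] y| =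
      gaussMap^[i] x * gaussMap^[i] y * |gaussMap^[i + 1] x - gaussMap^[i + 1] y| := by
  obtain ⟨j, hx, hy⟩ := h i hi
  rw [Function.iterate_succ_apply', Function.iterate_succ_apply']
  exact abs_sub_eq_mul_abs_gaussMap_sub hx hy

theorem SameGaussItinerary.abs_iterate_sub_le_succ (h : SameGaussItinerary n x y) (hi : i < n) :
    |gaussMap^[i] x - gaussMap^[i] y| ≤ |gaussMap^[i + 1] x - gaussMap^[i + 1] y| := by
  obtain ⟨j, hx, hy⟩ := h i hi
  rw [h.abs_iterate_sub_eq hi]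
  refine mul_le_of_le_one_left (abs_nonneg _) ?_
  nlinarith [pos_of_mem_gaussBranch hx, pos_of_mem_gaussBranch hy,
    lt_one_of_mem_gaussBranch hx, lt_one_of_mem_gaussBranch hy]

theorem SameGaussItinerary.four_mul_abs_iterate_sub_le (h : SameGaussItinerary n x y)
    (hi : i + 2 ≤ n) :
    4 * |gaussMap^[i] x - gaussMap^[i] y| ≤ |gaussMap^[i + 2] x - gaussMap^[i + 2] y| := by
  obtain ⟨j, hx, hy⟩ := h i (by omega)
  obtain ⟨j', hx', hy'⟩ := h (i + 1) (by omega)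
  have hfx := mul_gaussMap_le_half hx
  have hfy := mul_gaussMap_le_half hy
  rw [← Function.iterate_succ_apply' gaussMap i] at hfx hfy
  rw [h.abs_iterate_sub_eq (by omega), h.abs_iterate_sub_eq (by omega)]
  nlinarith [pos_of_mem_gaussBranch hx', pos_of_mem_gaussBranch hy',
    pos_of_mem_gaussBranch hx, pos_of_mem_gaussBranch hy,
    abs_nonneg (gaussMap^[i + 2] x - gaussMap^[i + 2] y),
    mul_le_mul hfx hfy (mul_pos (pos_of_mem_gaussBranch hy) (pos_of_mem_gaussBranch hy')).le
      (by norm_num : (0 : ℝ) ≤ 1 / 2)]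

theorem SameGaussItinerary.abs_birkhoff_sub_le (h : SameGaussItinerary n x y) :
    |birkhoff gaussMap gaussPot n x - birkhoff gaussMap gaussPot n y| ≤
      6 * |gaussMap^[n] x - gaussMap^[n] y| := by
  calc _ ≤ ∑ i ∈ range n, |gaussPot (gaussMap^[i] x) - gaussPot (gaussMap^[i] y)| :=
        abs_birkhoff_sub_le_sum _ _ _ _ _
    _ ≤ ∑ i ∈ range n, 2 * |gaussMap^[i + 1] x - gaussMap^[i + 1] y| := by
        refine sum_le_sum fun i hi => ?_
        obtain ⟨j, hx, hy⟩ := h i (mem_range.1 hi)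
        rw [Function.iterate_succ_apply', Function.iterate_succ_apply']
        exact abs_gaussPot_sub_le hx hy
    _ = 2 * ∑ i ∈ range n, |gaussMap^[i + 1] x - gaussMap^[i + 1] y| := (mul_sum ..).symm
    _ ≤ 2 * (3 * |gaussMap^[n] x - gaussMap^[n] y|) := by
        gcongr
        exact sum_range_succ_le_three_mul (d := fun i => |gaussMap^[i] x - gaussMap^[i] y|)
          (fun _ => abs_nonneg _)
          (fun i hi => h.abs_iterate_sub_le_succ hi) (fun i hi => h.four_mul_abs_iterate_sub_le hi)
    _ = _ := by ring

theorem SameGaussItinerary.abs_exp_birkhoff_sub_sub_one_le (h : SameGaussItinerary n x y) :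
    |exp (birkhoff gaussMap gaussPot n x - birkhoff gaussMap gaussPot n y) - 1| ≤
      6 * exp 6 * |gaussMap^[n] x - gaussMap^[n] y| ^ ((1 : ℝ) / 2) := by
  cases n with
  | zero => simp only [birkhoff, range_zero, sum_empty, sub_self, exp_zero, abs_zero]; positivity
  | succ m =>
    set D := |gaussMap^[m + 1] x - gaussMap^[m + 1] y|
    have hD1 : D ≤ 1 := by
      simp only [D, Function.iterate_succ_apply']
      exact (abs_gaussMap_sub_gaussMap_lt_one _ _).le
    have hΔ := h.abs_birkhoff_sub_le
    calc _ ≤ |birkhoff gaussMap gaussPot (m + 1) x - birkhoff gaussMap gaussPot (m + 1) y| *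
            exp |birkhoff gaussMap gaussPot (m + 1) x - birkhoff gaussMap gaussPot (m + 1) y| :=
          abs_exp_sub_one_le_abs_mul_exp_abs _
      _ ≤ 6 * D * exp 6 := by
          gcongr
          linarith
      _ ≤ 6 * exp 6 * D ^ ((1 : ℝ) / 2) := by
          rw [mul_right_comm]
          gcongr
          exact self_le_rpow_of_le_one (abs_nonneg _) hD1 (by norm_num)

theorem abs_deriv_iterate_gaussMap (hx : ∀ i < n, ∃ j, gaussMap^[i] x ∈ gaussBranch j) :
    |deriv gaussMap^[n] x| = exp (-birkhoff gaussMap gaussPot n x) := by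
  refine abs_deriv_iterate_eq_exp_neg_birkhoff (fun i hi => ?_) (fun i hi => ?_) <;>
    obtain ⟨j, hj⟩ := hx i hi
  · exact (hasDerivAt_gaussMap_of_mem_gaussBranch hj).differentiableAt
  · rw [(hasDerivAt_gaussMap_of_mem_gaussBranch hj).deriv]
    simpa using (pos_of_mem_gaussBranch hj).ne'

theorem SameGaussItinerary.abs_deriv_iterate_div (h : SameGaussItinerary n x y) :
    |deriv gaussMap^[n] y| / |deriv gaussMap^[n] x| =
      exp (birkhoff gaussMap gaussPot n x - birkhoff gaussMap gaussPot n y) := by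
  rw [abs_deriv_iterate_gaussMap fun i hi => (h i hi).imp fun _ hj => hj.2,
    abs_deriv_iterate_gaussMap fun i hi => (h i hi).imp fun _ hj => hj.1, ← exp_sub]
  ring_nf

end Orbit

/-- **Lemma 2.8 (Hölder distortion for the Gauss map).** There is `C_d > 0` such that for all
`n` and all `x, y` with `f^i x, f^i y` in the same branch `Z_{j_i}` for `i = 0,…,n−1`:
`|e^{S_nφ(x) − S_nφ(y)} − 1| ≤ C_d |f^n x − f^n y|^{1/2}`, i.e.
`||Df^n(y)|/|Df^n(x)| − 1| ≤ C_d |f^n x − f^n y|^{1/2}`. -/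
theorem stmt_16 :
    ∃ Cd : ℝ, 0 < Cd ∧ ∀ n : ℕ, ∀ x y : ℝ,
      (∀ i < n, ∃ j : ℕ, 1 ≤ j ∧ gaussMap^[i] x ∈ gaussBranch j ∧
        gaussMap^[i] y ∈ gaussBranch j) →
      |Real.exp (birkhoff gaussMap gaussPot n x - birkhoff gaussMap gaussPot n y) - 1|
          ≤ Cd * |gaussMap^[n] x - gaussMap^[n] y| ^ ((1:ℝ)/2) ∧
      abs (|deriv (gaussMap^[n]) y| / |deriv (gaussMap^[n]) x| - 1)
          ≤ Cd * |gaussMap^[n] x - gaussMap^[n] y| ^ ((1:ℝ)/2) := by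
  refine ⟨6 * exp 6, by positivity, fun n x y h => ?_⟩
  have hxy : SameGaussItinerary n x y := fun i hi => (h i hi).imp fun _ hj => hj.2
  rw [hxy.abs_deriv_iterate_div]
  exact ⟨hxy.abs_exp_birkhoff_sub_sub_one_le, hxy.abs_exp_birkhoff_sub_sub_one_le⟩
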